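/- Let f : ℝ³ → ℝ be twice continuously differentiable and g : ℝ³ → ℝ continuously differentiable, both with compact support, let x ∈ ℝ³, and fix τ > 0. Define, for 0 ≤ τ₀ < τ, A(τ,x;τ₀) := ∂_τ((τ−τ₀)·M_f(τ−τ₀,x)) + (τ−τ₀)·M_g(τ−τ₀,x). Then the limit lim_{τ₀→0⁺} A(τ,x;τ₀) exists and equals ∂_τ(τ·M_f(τ,x)) + τ·M_g(τ,x); that is, the Kirchhoff spherical-means solution depends continuously on the initial time τ₀ down to the singular time τ₀ = 0. -/

import Mathlib

/-!
For `r > 0` the map `y ↦ x + r • y` carries the unit sphere onto `S_r(x)` and scales `μH[2]` by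
`r²`, so `M_h(r, x) = (4π)⁻¹ ∫_{S²} h (x + r • y) dμH[2](y)`. The unit sphere has finite `μH[2]`
measure, being a Lipschitz image of a square under spherical coordinates, so by differentiating
under the integral sign `r ↦ ∂_r (r M_f(r, x)) + r M_g(r, x)` is continuous on `(0, ∞)`. The
quantity `A(τ, x; τ₀)` is this function evaluated at `τ - τ₀`, hence tends to its value at `τ`.
-/

open MeasureTheory Metric Real Filter Topology

/-- The spherical mean `M_f(r,x) = (1/(4π r²)) ∫_{S_r(x)} f dS` (surface measure = 2-dimensional
Hausdorff measure), extended by `M_f(0,x) := f(x)`. -/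
noncomputable def sphericalMean (f : EuclideanSpace ℝ (Fin 3) → ℝ) (r : ℝ)
    (x : EuclideanSpace ℝ (Fin 3)) : ℝ :=
  if r = 0 then f x
  else (1 / (4 * π * r ^ 2)) * ∫ y in sphere x r, f y ∂(μH[2])

open Set
open scoped NNReal ENNReal

section ParametricIntegral

variable {Y E : Type*} [TopologicalSpace Y] [MeasurableSpace Y] [OpensMeasurableSpace Y]
  [NormedAddCommGroup E] [NormedSpace ℝ E] [SecondCountableTopologyEither Y E]
  {μ : Measure Y} {s : Set Y}

theorem continuous_setIntegral_of_continuous_uncurry {F : ℝ → Y → E}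
    (hF : Continuous F.uncurry) (hs : IsCompact s) (hμs : μ s ≠ ∞) :
    Continuous fun r => ∫ y in s, F r y ∂μ := by
  have : IsFiniteMeasure (μ.restrict s) := isFiniteMeasure_restrict.mpr hμs
  simpa only [Measure.restrict_restrict_of_subset subset_rfl] using
    continuous_parametric_integral_of_continuous (μ := μ.restrict s) hF hs

theorem hasDerivAt_setIntegral_of_continuous_uncurry [T2Space Y] {F F' : ℝ → Y → E}
    (hF : Continuous F.uncurry) (hF' : Continuous F'.uncurry)
    (hFF' : ∀ r y, HasDerivAt (F · y) (F' r y) r) (hs : IsCompact s) (hμs : μ s ≠ ∞)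
    (r₀ : ℝ) : HasDerivAt (fun r => ∫ y in s, F r y ∂μ) (∫ y in s, F' r₀ y ∂μ) r₀ := by
  obtain ⟨M, hM⟩ :=
    ((isCompact_closedBall r₀ 1).prod hs).exists_bound_of_continuousOn hF'.continuousOn
  have hmeas : ∀ {G : ℝ → Y → E}, Continuous G.uncurry → ∀ r,
      AEStronglyMeasurable (G r) (μ.restrict s) := fun hG r =>
    (hG.comp (Continuous.prodMk_right r)).aestronglyMeasurable
  refine (hasDerivAt_integral_of_dominated_loc_of_deriv_le (bound := fun _ => M)
    (closedBall_mem_nhds r₀ one_pos) (.of_forall (hmeas hF))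
    ((hF.comp (Continuous.prodMk_right r₀)).continuousOn.integrableOn_of_subset_isCompact hs
      hs.measurableSet subset_rfl hμs)
    (hmeas hF' r₀) ?_ (integrableOn_const hμs) (.of_forall fun y r _ => hFF' r y)).2
  filter_upwards [ae_restrict_mem hs.measurableSet] with y hy r hr
  exact hM (r, y) ⟨hr, hy⟩

end ParametricIntegral

section Homothety

variable {E F : Type*} [NormedAddCommGroup E] [NormedSpace ℝ E]

theorem continuous_add_fst_smul_snd (x : E) : Continuous fun p : ℝ × E => x + p.1 • p.2 := by
  fun_prop

variable [MeasurableSpace E] [BorelSpace E] [NormedAddCommGroup F] [NormedSpace ℝ F]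

theorem map_add_smul_hausdorffMeasure {d : ℝ} (hd : 0 ≤ d) (x : E) {r : ℝ} (hr : r ≠ 0) :
    Measure.map (fun y => x + r • y) μH[d] = ‖r‖₊⁻¹ ^ d • μH[d] := by
  have hsmul : (fun y : E => r • y) = AffineMap.homothety (0 : E) r := by
    ext y; simp [AffineMap.homothety_apply]
  have : (fun y : E => x + r • y) = (IsometryEquiv.addLeft x) ∘ (fun y => r • y) := rfl
  rw [this, ← Measure.map_map (IsometryEquiv.addLeft x).continuous.measurable
    (continuous_const_smul r).measurable, hsmul, map_homothety_hausdorffMeasure hd 0 hr,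
    Measure.map_smul, IsometryEquiv.map_hausdorffMeasure]

theorem setIntegral_sphere_eq_smul_setIntegral_unitSphere {d : ℝ} (hd : 0 ≤ d) (h : E → F)
    (x : E) {r : ℝ} (hr : 0 < r) :
    ∫ y in sphere x r, h y ∂μH[d] = r ^ d • ∫ y in sphere 0 1, h (x + r • y) ∂μH[d] := by
  have hemb : MeasurableEmbedding fun y : E => x + r • y :=
    ((Homeomorph.smulOfNeZero r hr.ne').trans (Homeomorph.addLeft x)).measurableEmbedding
  have hpre : (fun y : E => x + r • y) ⁻¹' sphere x r = sphere 0 1 := by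
    ext y; simp [norm_smul, abs_of_pos hr, hr.ne']
  have hμ : (μH[d] : Measure E) = (‖r‖₊ ^ d) • Measure.map (fun y => x + r • y) μH[d] := by
    rw [map_add_smul_hausdorffMeasure hd x hr.ne', smul_smul, ← NNReal.mul_rpow,
      mul_inv_cancel₀ (nnnorm_ne_zero_iff.mpr hr.ne'), NNReal.one_rpow, one_smul]
  conv_lhs => rw [hμ]
  rw [Measure.restrict_smul, integral_smul_nnreal_measure, hemb.setIntegral_map, hpre,
    NNReal.smul_def, NNReal.coe_rpow, coe_nnnorm, norm_of_nonneg hr.le]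

end Homothety

theorem IsCompact.hausdorffMeasure_image_lt_top_of_locallyLipschitzOn {ι X : Type*} [Fintype ι]
    [MetricSpace X] [MeasurableSpace X] [BorelSpace X] {P : (ι → ℝ) → X} {K : Set (ι → ℝ)}
    (hK : IsCompact K) (hP : LocallyLipschitzOn K P) :
    μH[Fintype.card ι] (P '' K) < ∞ := by
  obtain ⟨L, hL⟩ := hP.exists_lipschitzOnWith_of_compact hK
  calc μH[Fintype.card ι] (P '' K) ≤ (L : ℝ≥0∞) ^ (Fintype.card ι : ℝ) * μH[Fintype.card ι] K :=
        hL.hausdorffMeasure_image_le (Nat.cast_nonneg _)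
    _ < ∞ := by
      rw [hausdorffMeasure_pi_real]
      exact ENNReal.mul_lt_top (by simp) hK.measure_lt_top

local notation "ℝ³" => EuclideanSpace ℝ (Fin 3)

noncomputable def sphericalCoord (p : Fin 2 → ℝ) : ℝ³ :=
  !₂[sin (p 0) * cos (p 1), sin (p 0) * sin (p 1), cos (p 0)]

theorem contDiff_sphericalCoord : ContDiff ℝ 1 sphericalCoord := by
  refine (EuclideanSpace.equiv (Fin 3) ℝ).symm.contDiff.comp (contDiff_pi.mpr fun i => ?_)
  fin_cases i <;> dsimp <;> fun_prop

theorem sphere_subset_sphericalCoord_image :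
    sphere (0 : ℝ³) 1 ⊆ sphericalCoord '' closedBall 0 π := by
  intro y hy
  have hsum : y 0 ^ 2 + y 1 ^ 2 + y 2 ^ 2 = 1 := by
    have := EuclideanSpace.norm_sq_eq y
    simp_all [Fin.sum_univ_three]
  set z : ℂ := ⟨y 0, y 1⟩
  have hz : ‖z‖ = sin (arccos (y 2)) := by
    rw [sin_arccos, Complex.norm_eq_sqrt_sq_add_sq]
    congr 1
    linarith
  refine ⟨![arccos (y 2), z.arg], ?_, ?_⟩
  · rw [mem_closedBall, dist_zero_right, pi_norm_le_iff_of_nonneg pi_pos.le]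
    intro i
    fin_cases i
    · simpa [abs_of_nonneg (arccos_nonneg _)] using arccos_le_pi _
    · simpa using Complex.abs_arg_le_pi z
  · ext i
    fin_cases i
    · simp [sphericalCoord, ← hz, Complex.norm_mul_cos_arg, z]
    · simp [sphericalCoord, ← hz, Complex.norm_mul_sin_arg, z]
    · simp [sphericalCoord, cos_arccos (by nlinarith : -1 ≤ y 2) (by nlinarith : y 2 ≤ 1)]

theorem hausdorffMeasure_unitSphere_lt_top : μH[2] (sphere (0 : ℝ³) 1) < ∞ := by
  have hsquare := IsCompact.hausdorffMeasure_image_lt_top_of_locallyLipschitzOn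
    (isCompact_closedBall (0 : Fin 2 → ℝ) π)
    contDiff_sphericalCoord.locallyLipschitz.locallyLipschitzOn
  norm_num at hsquare
  exact (measure_mono sphere_subset_sphericalCoord_image).trans_lt hsquare

theorem sphericalMean_eq_integral_unitSphere (h : ℝ³ → ℝ) (x : ℝ³) {r : ℝ} (hr : 0 < r) :
    sphericalMean h r x = (4 * π)⁻¹ * ∫ y in sphere 0 1, h (x + r • y) ∂μH[2] := by
  rw [sphericalMean, if_neg hr.ne',
    setIntegral_sphere_eq_smul_setIntegral_unitSphere zero_le_two h x hr, smul_eq_mul, rpow_two]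
  field_simp

theorem continuousOn_sphericalMean {h : ℝ³ → ℝ} (hh : Continuous h) (x : ℝ³) :
    ContinuousOn (fun r => sphericalMean h r x) (Ioi 0) := by
  have hJ : Continuous fun r : ℝ => ∫ y in sphere 0 1, h (x + r • y) ∂μH[2] :=
    continuous_setIntegral_of_continuous_uncurry (hh.comp (continuous_add_fst_smul_snd x))
      (isCompact_sphere 0 1) hausdorffMeasure_unitSphere_lt_top.ne
  exact (continuous_const.mul hJ).continuousOn.congr fun r hr =>
    sphericalMean_eq_integral_unitSphere h x hr

theorem hasDerivAt_integral_unitSphere_comp_add_smul {f : ℝ³ → ℝ} (hf : ContDiff ℝ 1 f)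
    (x : ℝ³) (r : ℝ) :
    HasDerivAt (fun r => ∫ y in sphere 0 1, f (x + r • y) ∂μH[2])
      (∫ y in sphere 0 1, fderiv ℝ f (x + r • y) y ∂μH[2]) r := by
  refine hasDerivAt_setIntegral_of_continuous_uncurry (F := fun r y => f (x + r • y))
    (F' := fun r y => fderiv ℝ f (x + r • y) y)
    (hf.continuous.comp (continuous_add_fst_smul_snd x))
    (((hf.continuous_fderiv one_ne_zero).comp (continuous_add_fst_smul_snd x)).clm_apply
      continuous_snd)
    (fun r y => ?_) (isCompact_sphere 0 1) hausdorffMeasure_unitSphere_lt_top.ne r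
  have hline : HasDerivAt (fun r : ℝ => x + r • y) y r := by
    simpa using ((hasDerivAt_id r).smul_const y).const_add x
  exact (hf.differentiable one_ne_zero _).hasFDerivAt.comp_hasDerivAt r hline

theorem continuousOn_deriv_mul_sphericalMean {f : ℝ³ → ℝ} (hf : ContDiff ℝ 1 f) (x : ℝ³) :
    ContinuousOn (deriv fun s => s * sphericalMean f s x) (Ioi 0) := by
  set J := fun r : ℝ => ∫ y in sphere 0 1, f (x + r • y) ∂μH[2]
  set J' := fun r : ℝ => ∫ y in sphere 0 1, fderiv ℝ f (x + r • y) y ∂μH[2]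
  have hJ' : Continuous J' := continuous_setIntegral_of_continuous_uncurry
    (((hf.continuous_fderiv one_ne_zero).comp (continuous_add_fst_smul_snd x)).clm_apply
      continuous_snd) (isCompact_sphere 0 1) hausdorffMeasure_unitSphere_lt_top.ne
  have hJ : Continuous J := continuous_iff_continuousAt.mpr fun r =>
    (hasDerivAt_integral_unitSphere_comp_add_smul hf x r).continuousAt
  refine (show Continuous fun r => 1 * ((4 * π)⁻¹ * J r) + r * ((4 * π)⁻¹ * J' r) by
    fun_prop).continuousOn.congr fun r hr => ?_
  have hmean : (fun s => s * sphericalMean f s x) =ᶠ[𝓝 r] fun s => s * ((4 * π)⁻¹ * J s) := by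
    filter_upwards [Ioi_mem_nhds hr] with s hs
    rw [sphericalMean_eq_integral_unitSphere f x hs]
  rw [hmean.deriv_eq]
  exact ((hasDerivAt_id r).mul
    ((hasDerivAt_integral_unitSphere_comp_add_smul hf x r).const_mul _)).deriv

theorem kirchhoff_tendsto_singular_initial_time_general
    (f g : EuclideanSpace ℝ (Fin 3) → ℝ)
    (hf : ContDiff ℝ 2 f) (hg : ContDiff ℝ 1 g)
    (x : EuclideanSpace ℝ (Fin 3)) (τ : ℝ) (hτ : 0 < τ) :
    Tendsto (fun τ₀ : ℝ =>
        deriv (fun s => (s - τ₀) * sphericalMean f (s - τ₀) x) τ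
          + (τ - τ₀) * sphericalMean g (τ - τ₀) x)
      (𝓝[>] 0)
      (𝓝 (deriv (fun s => s * sphericalMean f s x) τ + τ * sphericalMean g τ x)) := by
  have hsolution : ContinuousAt
      (fun r => deriv (fun s => s * sphericalMean f s x) r + r * sphericalMean g r x) τ :=
    ((continuousOn_deriv_mul_sphericalMean (hf.of_le one_le_two) x).add
      (continuousOn_id.mul (continuousOn_sphericalMean hg.continuous x))).continuousAt
      (Ioi_mem_nhds hτ)
  have hshift : Tendsto (fun τ₀ : ℝ => τ - τ₀) (𝓝[>] 0) (𝓝 τ) :=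
    ((continuous_sub_left τ).tendsto' 0 τ (sub_zero τ)).mono_left nhdsWithin_le_nhds
  refine (hsolution.tendsto.comp hshift).congr fun τ₀ => ?_
  simp only [Function.comp_apply, deriv_comp_sub_const (fun u => u * sphericalMean f u x)]

/-- For fixed `τ > 0`, the Kirchhoff spherical-means solution
`A(τ,x;τ₀) = ∂_τ((τ−τ₀)·M_f(τ−τ₀,x)) + (τ−τ₀)·M_g(τ−τ₀,x)` depends continuously on the
initial time `τ₀` down to the singular time `τ₀ = 0`: as `τ₀ → 0⁺` it converges to
`∂_τ(τ·M_f(τ,x)) + τ·M_g(τ,x)`. -/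
theorem kirchhoff_tendsto_singular_initial_time
    (f g : EuclideanSpace ℝ (Fin 3) → ℝ)
    (hf : ContDiff ℝ 2 f) (hg : ContDiff ℝ 1 g)
    (hfsupp : HasCompactSupport f) (hgsupp : HasCompactSupport g)
    (x : EuclideanSpace ℝ (Fin 3)) (τ : ℝ) (hτ : 0 < τ) :
    Tendsto (fun τ₀ : ℝ =>
        deriv (fun s => (s - τ₀) * sphericalMean f (s - τ₀) x) τ
          + (τ - τ₀) * sphericalMean g (τ - τ₀) x)
      (𝓝[>] 0)
      (𝓝 (deriv (fun s => s * sphericalMean f s x) τ + τ * sphericalMean g τ x)) :=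
  kirchhoff_tendsto_singular_initial_time_general f g hf hg x τ hτ
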